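/- Let G=(X,w,κ,μ) be a graph, 1≤p<∞, with condition (C_p) assumed if p>1, and let f satisfy (F1) or (F2). Fix an increasing exhaustion {X_n} of X by finite subsets and let Ω_p be the associated set. Then C_c(X) ⊆ Ω_p ⊆ dom_p(𝒜), and consequently the closures of Ω_p and of dom_p(𝒜) in ℓ^p(X,μ) both equal ℓ^p(X,μ). -/

import Mathlib

open Filter Topology MeasureTheory

/-- A weighted graph `G = (X, w, κ, μ)`. -/
structure WGraph (X : Type*) where
  w : X → X → ℝ
  kap : X → ℝ
  mu : X → ℝ
  w_nonneg : ∀ x y, 0 ≤ w x y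
  w_symm : ∀ x y, w x y = w y x
  w_loopless : ∀ x, w x x = 0
  w_summable : ∀ x, Summable (fun y => w x y)
  kap_nonneg : ∀ x, 0 ≤ kap x
  mu_pos : ∀ x, 0 < mu x

namespace WGraph

variable {X : Type*}

/-- Adjacency: `x ∼ y` iff `w x y > 0`. -/
def Adj (G : WGraph X) (x y : X) : Prop := 0 < G.w x y

/-- `G` is connected: any two nodes are joined by a finite walk. -/
def Connected (G : WGraph X) : Prop := ∀ x y : X, Relation.ReflTransGen G.Adj x y

/-- An infinite path: injective sequence of consecutively adjacent nodes. -/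
def InfinitePath (G : WGraph X) (γ : ℕ → X) : Prop :=
  Function.Injective γ ∧ ∀ n, G.Adj (γ n) (γ (n + 1))

/-- Condition (IP): every infinite path has infinite total measure. -/
def CondIP (G : WGraph X) : Prop :=
  ∀ γ : ℕ → X, G.InfinitePath γ → ¬ Summable (fun n => G.mu (γ n))

/-- Condition (B): bounded edge degree. -/
def CondB (G : WGraph X) : Prop :=
  ∃ C : ℝ, ∀ x, (∑' y, G.w x y) / G.mu x ≤ C

/-- Condition (C_p). -/
def CondCp (G : WGraph X) (p : ℝ) : Prop :=
  ∀ x, Summable (fun y => G.w x y ^ p / G.mu y ^ (p - 1))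

/-- Membership in `ℓ^p(X,μ)` for `1 ≤ p < ∞`. -/
def memLp (G : WGraph X) (p : ℝ) (u : X → ℝ) : Prop :=
  Summable (fun x => |u x| ^ p * G.mu x)

/-- The `ℓ^p(X,μ)`-norm. -/
noncomputable def lpNorm (G : WGraph X) (p : ℝ) (u : X → ℝ) : ℝ :=
  (∑' x, |u x| ^ p * G.mu x) ^ (1 / p)

/-- Membership in the formal domain of the graph Laplacian. -/
def inDomLap (G : WGraph X) (u : X → ℝ) : Prop :=
  ∀ x, Summable (fun y => G.w x y * |u y|)

/-- The formal graph Laplacian. -/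
noncomputable def lap (G : WGraph X) (u : X → ℝ) (x : X) : ℝ :=
  (1 / G.mu x) * ∑' y, G.w x y * (u x - u y) + (G.kap x / G.mu x) * u x

/-- The nonlinear operator `𝒜 u = -f ∘ u + Δ u`. -/
noncomputable def Aop (G : WGraph X) (f : ℝ → ℝ) (u : X → ℝ) (x : X) : ℝ :=
  -f (u x) + G.lap u x

/-- `dom_p(𝒜)`. -/
def inDomA (G : WGraph X) (f : ℝ → ℝ) (p : ℝ) (u : X → ℝ) : Prop :=
  G.memLp p u ∧ G.inDomLap u ∧ G.memLp p (G.Aop f u)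

end WGraph

/-- Condition (F1): `f` continuous, monotone decreasing, `f 0 = 0`. -/
def CondF1 (f : ℝ → ℝ) : Prop := Continuous f ∧ Antitone f ∧ f 0 = 0

/-- Condition (F2): `f` uniformly Lipschitz with constant `L > 0`, `f 0 = 0`. -/
def CondF2 (f : ℝ → ℝ) (L : ℝ) : Prop :=
  0 < L ∧ (∀ s t : ℝ, |f t - f s| ≤ L * |t - s|) ∧ f 0 = 0
namespace WGraph

variable {X : Type*}

/-- The Dirichlet Laplacian of the Dirichlet subgraph on `Y ⊆ X`, applied to the
restriction to `Y` of a function on `X` (extended by zero outside `Y`). -/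
noncomputable def lapDir (G : WGraph X) (Y : Set X) (u : X → ℝ) (x : X) : ℝ :=
  (1 / G.mu x) * (∑' y : Y, G.w x y.1 * (u x - u y.1))
    + ((G.kap x + ∑' z : ↥(Yᶜ), G.w x z.1) / G.mu x) * u x

-- The approximating operator `𝒜_n = i_n (F + Δ_{dir,n}) π_n` on the Dirichlet
-- subgraph with node set `Y`.
open Classical in
noncomputable def AopDir (G : WGraph X) (f : ℝ → ℝ) (Y : Set X) (u : X → ℝ) (x : X) : ℝ :=
  if x ∈ Y then -f (u x) + G.lapDir Y u x else 0

open Filter Topology in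
/-- The set `Ω_p` associated with the exhaustion `Xn`. -/
def OmegaP (G : WGraph X) (f : ℝ → ℝ) (p : ℝ) (Xn : ℕ → Set X) : Set (X → ℝ) :=
  {u | G.inDomA f p u ∧ ∃ un : ℕ → X → ℝ,
    (∀ n, Function.support (un n) ⊆ Xn n) ∧
    Tendsto (fun n => G.lpNorm p (fun x => un n x - u x)) atTop (nhds 0) ∧
    Tendsto (fun n => G.lpNorm p (fun x => G.AopDir f (Xn n) (un n) x - G.Aop f u x))
      atTop (nhds 0)}

end WGraph

/-!
Finitely supported functions lie in `dom_p(𝒜)`: off the support of `u`, `𝒜 u` is a finite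
combination of the functions `x ↦ w(x,y)/μ(x)`, which lie in `ℓ^p` exactly by (C_p). On a set
`X_n` containing the support of `u`, the Dirichlet operator `𝒜_n` agrees with `𝒜`, because the
killing term `∑_{z ∉ X_n} w(x,z)` of the Dirichlet subgraph accounts for the edges leaving `X_n`;
hence `𝒜_n u - 𝒜 u` is the tail of `𝒜 u` outside `X_n`, which tends to zero in `ℓ^p`. Density of
`Ω_p` and `dom_p(𝒜)` then follows from the density of `C_c(X)`.
-/

open Function

theorem tendsto_tsum_indicator_compl {X ι : Type*} {l : Filter ι} {S : ι → Set X}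
    (hS : ∀ x, ∀ᶠ i in l, x ∈ S i) {g : X → ℝ} (hg : Summable g) :
    Tendsto (fun i => ∑' x, (S i)ᶜ.indicator g x) l (𝓝 0) := by
  simpa using tendsto_tsum_of_dominated_convergence (f := fun i x => (S i)ᶜ.indicator g x)
    (g := fun _ => 0) hg.abs
    (fun x => tendsto_const_nhds.congr' <| (hS x).mono fun i hi => by simp [hi])
    (Eventually.of_forall fun i x => by
      simpa only [Real.norm_eq_abs] using norm_indicator_le_norm_self g x)

theorem eventually_mem_of_monotone_of_iUnion_eq_univ {X : Type*} {Xn : ℕ → Set X}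
    (hmono : Monotone Xn) (hexh : (⋃ n, Xn n) = Set.univ) (x : X) :
    ∀ᶠ n in atTop, x ∈ Xn n := by
  obtain ⟨N, hN⟩ := Set.mem_iUnion.1 (hexh ▸ Set.mem_univ x)
  exact eventually_atTop.2 ⟨N, fun n hn => hmono hn hN⟩

namespace WGraph

variable {X : Type*} (G : WGraph X) {p : ℝ}

theorem condCp_one : G.CondCp 1 := by
  simpa [CondCp] using G.w_summable

theorem summable_w_mul_sub {u : X → ℝ} (hu : G.inDomLap u) (x : X) :
    Summable fun y => G.w x y * (u x - u y) := by
  have hwu : Summable fun y => G.w x y * u y :=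
    (hu x).of_norm_bounded fun y => by
      rw [norm_mul, Real.norm_eq_abs, Real.norm_eq_abs, abs_of_nonneg (G.w_nonneg x y)]
  simpa only [mul_sub] using ((G.w_summable x).mul_right (u x)).sub hwu

theorem inDomLap_of_finite_support {u : X → ℝ} (hu : (support u).Finite) : G.inDomLap u :=
  fun x => summable_of_hasFiniteSupport <| hu.subset fun y hy => by
    contrapose! hy
    simp [notMem_support.1 hy]

section memLp

theorem memLp_of_finite_support (hp : p ≠ 0) {u : X → ℝ} (hu : (support u).Finite) :
    G.memLp p u :=
  summable_of_hasFiniteSupport <| hu.subset fun x hx => by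
    contrapose! hx
    simp [notMem_support.1 hx, Real.zero_rpow hp]

theorem memLp_congr_cofinite {u v : X → ℝ} (huv : u =ᶠ[cofinite] v) (hu : G.memLp p u) :
    G.memLp p v :=
  Summable.congr_cofinite hu <| huv.mono fun x hx => by simp only [hx]

theorem memLp_const_mul (c : ℝ) {u : X → ℝ} (hu : G.memLp p u) :
    G.memLp p fun x => c * u x := by
  simpa only [memLp, abs_mul, Real.mul_rpow (abs_nonneg c) (abs_nonneg _), mul_assoc]
    using hu.mul_left (|c| ^ p)

theorem memLp_add (hp : 1 ≤ p) {u v : X → ℝ} (hu : G.memLp p u) (hv : G.memLp p v) :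
    G.memLp p (u + v) := by
  have hpow (a b : ℝ) : |a + b| ^ p ≤ 2 ^ (p - 1) * (|a| ^ p + |b| ^ p) := by
    have hmean := NNReal.rpow_add_le_mul_rpow_add_rpow ⟨|a|, abs_nonneg a⟩ ⟨|b|, abs_nonneg b⟩ hp
    refine (Real.rpow_le_rpow (abs_nonneg _) (abs_add_le a b) (by linarith)).trans ?_
    exact_mod_cast hmean
  refine Summable.of_nonneg_of_le
    (fun x => mul_nonneg (Real.rpow_nonneg (abs_nonneg _) _) (G.mu_pos x).le)
    (fun x => ?_) ((hu.add hv).mul_left (2 ^ (p - 1)))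
  calc |(u + v) x| ^ p * G.mu x ≤ 2 ^ (p - 1) * (|u x| ^ p + |v x| ^ p) * G.mu x :=
        mul_le_mul_of_nonneg_right (hpow _ _) (G.mu_pos x).le
    _ = 2 ^ (p - 1) * (|u x| ^ p * G.mu x + |v x| ^ p * G.mu x) := by ring

theorem memLp_finset_sum (hp : 1 ≤ p) {ι : Type*} (s : Finset ι) {v : ι → X → ℝ}
    (hv : ∀ i ∈ s, G.memLp p (v i)) : G.memLp p fun x => ∑ i ∈ s, v i x := by
  simpa only [← Finset.sum_apply] using
    Finset.sum_induction v (G.memLp p) (fun _ _ => G.memLp_add hp)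
      (G.memLp_of_finite_support (by linarith) (by simp)) hv

theorem memLp_w_div_mu (hC : G.CondCp p) (y : X) : G.memLp p fun x => G.w x y / G.mu x :=
  (hC y).congr fun x => by
    have hmu := G.mu_pos x
    rw [G.w_symm, abs_of_nonneg (div_nonneg (G.w_nonneg x y) hmu.le),
      Real.div_rpow (G.w_nonneg x y) hmu.le, Real.rpow_sub hmu, Real.rpow_one]
    field_simp

end memLp

section lpNorm

theorem lpNorm_neg (u : X → ℝ) : G.lpNorm p (fun x => -u x) = G.lpNorm p u := by
  simp only [lpNorm, abs_neg]

theorem tendsto_lpNorm_indicator_compl (hp : 0 < p) {ι : Type*} {l : Filter ι}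
    {S : ι → Set X} (hS : ∀ x, ∀ᶠ i in l, x ∈ S i) {v : X → ℝ} (hv : G.memLp p v) :
    Tendsto (fun i => G.lpNorm p ((S i)ᶜ.indicator v)) l (𝓝 0) := by
  have hpow : Tendsto (fun t : ℝ => t ^ (1 / p)) (𝓝 0) (𝓝 0) := by
    have h := (Real.continuousAt_rpow_const 0 (1 / p) (Or.inr (one_div_pos.2 hp).le)).tendsto
    rwa [Real.zero_rpow (one_div_pos.2 hp).ne'] at h
  refine (hpow.comp (tendsto_tsum_indicator_compl hS hv)).congr fun i => ?_
  simp only [comp_apply, lpNorm]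
  congr 1
  refine tsum_congr fun x => ?_
  by_cases hx : x ∈ S i <;> simp [hx, Real.zero_rpow hp.ne']

theorem exists_finite_support_lpNorm_sub_lt (hp : 0 < p) {v : X → ℝ} (hv : G.memLp p v)
    {ε : ℝ} (hε : 0 < ε) :
    ∃ u : X → ℝ, (support u).Finite ∧ G.lpNorm p (fun x => v x - u x) < ε := by
  have hS (x : X) : ∀ᶠ s : Finset X in atTop, x ∈ (s : Set X) :=
    (eventually_ge_atTop {x}).mono fun s hs => hs (Finset.mem_singleton_self x)
  obtain ⟨s, hs⟩ :=
    ((G.tendsto_lpNorm_indicator_compl hp hS hv).eventually (gt_mem_nhds hε)).exists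
  refine ⟨(s : Set X).indicator v, s.finite_toSet.subset Set.support_indicator_subset, ?_⟩
  rwa [Set.indicator_compl] at hs

end lpNorm

theorem Aop_eq_of_apply_eq_zero {f : ℝ → ℝ} (hf0 : f 0 = 0) {u : X → ℝ}
    (hu : (support u).Finite) {x : X} (hx : u x = 0) :
    G.Aop f u x = ∑ y ∈ hu.toFinset, -u y * (G.w x y / G.mu x) := by
  have hsum : ∑' y, G.w x y * (u x - u y) = ∑ y ∈ hu.toFinset, G.w x y * (u x - u y) :=
    tsum_eq_sum fun y hy => by simp [hx, notMem_support.1 (by simpa using hy)]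
  rw [Aop, lap, hsum, hx, hf0, Finset.mul_sum]
  simp only [zero_sub, mul_zero, add_zero, neg_zero, zero_add]
  exact Finset.sum_congr rfl fun y _ => by ring

theorem memLp_Aop_of_finite_support (hp : 1 ≤ p) (hC : G.CondCp p) {f : ℝ → ℝ}
    (hf0 : f 0 = 0) {u : X → ℝ} (hu : (support u).Finite) : G.memLp p (G.Aop f u) := by
  refine G.memLp_congr_cofinite ?_ <| G.memLp_finset_sum hp hu.toFinset fun y _ =>
    G.memLp_const_mul (-u y) (G.memLp_w_div_mu hC y)
  filter_upwards [eventually_cofinite.2 hu] with x hx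
  exact (G.Aop_eq_of_apply_eq_zero hf0 hu hx).symm

theorem inDomA_of_finite_support (hp : 1 ≤ p) (hC : G.CondCp p) {f : ℝ → ℝ}
    (hf0 : f 0 = 0) {u : X → ℝ} (hu : (support u).Finite) : G.inDomA f p u :=
  ⟨G.memLp_of_finite_support (by linarith) hu, G.inDomLap_of_finite_support hu,
    G.memLp_Aop_of_finite_support hp hC hf0 hu⟩

theorem AopDir_eq_Aop (f : ℝ → ℝ) {Y : Set X} {u : X → ℝ} (hu : G.inDomLap u)
    (hsub : support u ⊆ Y) {x : X} (hx : x ∈ Y) : G.AopDir f Y u x = G.Aop f u x := by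
  have hsum := G.summable_w_mul_sub hu x
  have hcompl : ∑' z : ↥Yᶜ, G.w x z * (u x - u z) = (∑' z : ↥Yᶜ, G.w x z) * u x := by
    rw [← tsum_mul_right]
    refine tsum_congr fun z => ?_
    rw [notMem_support.1 fun hz => z.2 (hsub hz), sub_zero]
  rw [AopDir, if_pos hx, Aop, lapDir, lap, ← (hsum.subtype Y).tsum_add_tsum_compl
    (hsum.subtype Yᶜ), hcompl]
  field_simp [(G.mu_pos x).ne']
  ring

theorem AopDir_sub_Aop (f : ℝ → ℝ) {Y : Set X} {u : X → ℝ} (hu : G.inDomLap u)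
    (hsub : support u ⊆ Y) :
    (fun x => G.AopDir f Y u x - G.Aop f u x) = fun x => -Yᶜ.indicator (G.Aop f u) x := by
  funext x
  by_cases hx : x ∈ Y
  · simp [G.AopDir_eq_Aop f hu hsub hx, hx]
  · simp [AopDir, hx]

theorem mem_OmegaP_of_finite_support (hp : 1 ≤ p) (hC : G.CondCp p) {f : ℝ → ℝ}
    (hf0 : f 0 = 0) {Xn : ℕ → Set X} (hXn : ∀ x, ∀ᶠ n in atTop, x ∈ Xn n) {u : X → ℝ}
    (hu : (support u).Finite) : u ∈ G.OmegaP f p Xn := by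
  have hdom := G.inDomA_of_finite_support hp hC hf0 hu
  have hp0 : 0 < p := by linarith
  refine ⟨hdom, fun n => (Xn n).indicator u, fun n => Set.support_indicator_subset, ?_, ?_⟩
  · refine (G.tendsto_lpNorm_indicator_compl hp0 hXn hdom.1).congr fun n => ?_
    rw [← G.lpNorm_neg, Set.indicator_compl]
    simp
  · have hsub : ∀ᶠ n in atTop, support u ⊆ Xn n :=
      (eventually_all_finite hu).2 fun x _ => hXn x
    refine (G.tendsto_lpNorm_indicator_compl hp0 hXn hdom.2.2).congr' ?_
    filter_upwards [hsub] with n hn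
    rw [Set.indicator_eq_self.2 hn, G.AopDir_sub_Aop f hdom.2.1 hn, G.lpNorm_neg]

end WGraph

theorem stmt8_general {X : Type*} (G : WGraph X) (f : ℝ → ℝ) (p : ℝ)
    (hp : 1 ≤ p) (hCp : 1 < p → G.CondCp p)
    (hf : CondF1 f ∨ ∃ L, CondF2 f L)
    (Xn : ℕ → Set X) (hmono : Monotone Xn)
    (hexh : (⋃ n, Xn n) = Set.univ) :
    {u : X → ℝ | (Function.support u).Finite} ⊆ G.OmegaP f p Xn ∧
    G.OmegaP f p Xn ⊆ {u : X → ℝ | G.inDomA f p u} ∧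
    (∀ v : X → ℝ, G.memLp p v → ∀ ε > 0, ∃ u ∈ G.OmegaP f p Xn,
      G.lpNorm p (fun x => v x - u x) < ε) ∧
    (∀ v : X → ℝ, G.memLp p v → ∀ ε > 0, ∃ u : X → ℝ, G.inDomA f p u ∧
      G.lpNorm p (fun x => v x - u x) < ε) := by
  have hf0 : f 0 = 0 := hf.elim (fun h => h.2.2) fun ⟨_, h⟩ => h.2.2
  have hC : G.CondCp p := hp.eq_or_lt.elim (fun h => h ▸ G.condCp_one) hCp
  have hCc : {u : X → ℝ | (support u).Finite} ⊆ G.OmegaP f p Xn := fun _ hu =>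
    G.mem_OmegaP_of_finite_support hp hC hf0
      (eventually_mem_of_monotone_of_iUnion_eq_univ hmono hexh) hu
  have hdense (v : X → ℝ) (hv : G.memLp p v) (ε : ℝ) (hε : ε > 0) :
      ∃ u ∈ G.OmegaP f p Xn, G.lpNorm p (fun x => v x - u x) < ε := by
    obtain ⟨u, hu, hlt⟩ := G.exists_finite_support_lpNorm_sub_lt (by linarith) hv hε
    exact ⟨u, hCc hu, hlt⟩
  refine ⟨hCc, fun u hu => hu.1, hdense, fun v hv ε hε => ?_⟩
  obtain ⟨u, hu, hlt⟩ := hdense v hv ε hε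
  exact ⟨u, hu.1, hlt⟩

/-- `C_c(X) ⊆ Ω_p ⊆ dom_p(𝒜)`, and both `Ω_p` and `dom_p(𝒜)` are
dense in `ℓ^p(X,μ)`. -/
theorem stmt8 {X : Type*} [Countable X] (G : WGraph X) (f : ℝ → ℝ) (p : ℝ)
    (hp : 1 ≤ p) (hCp : 1 < p → G.CondCp p)
    (hf : CondF1 f ∨ ∃ L, CondF2 f L)
    (Xn : ℕ → Set X) (hfin : ∀ n, (Xn n).Finite) (hmono : Monotone Xn)
    (hexh : (⋃ n, Xn n) = Set.univ) :
    {u : X → ℝ | (Function.support u).Finite} ⊆ G.OmegaP f p Xn ∧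
    G.OmegaP f p Xn ⊆ {u : X → ℝ | G.inDomA f p u} ∧
    (∀ v : X → ℝ, G.memLp p v → ∀ ε > 0, ∃ u ∈ G.OmegaP f p Xn,
      G.lpNorm p (fun x => v x - u x) < ε) ∧
    (∀ v : X → ℝ, G.memLp p v → ∀ ε > 0, ∃ u : X → ℝ, G.inDomA f p u ∧
      G.lpNorm p (fun x => v x - u x) < ε) :=
  stmt8_general G f p hp hCp hf Xn hmono hexh
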